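/- The class of matroids that have an adjoint is closed under taking minors: if M has an adjoint and N is a minor of M, then N has an adjoint. -/

import Mathlib

open Set

namespace Matroid

variable {α β : Type*}

/-- The rank of a set in a matroid, valued in `ℕ∞`. -/
noncomputable def eRk' (M : Matroid α) (X : Set α) : ℕ∞ :=
  ⨆ I ∈ {I | M.Indep I ∧ I ⊆ X}, I.encard

/-- A hyperplane is a flat of rank `r(M) - 1`. -/
def Hyperplane' (M : Matroid α) (H : Set α) : Prop :=
  M.IsFlat H ∧ M.eRk' H + 1 = M.eRk' M.E

/-- A point is a rank-one flat. -/
def Point' (M : Matroid α) (P : Set α) : Prop :=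
  M.IsFlat P ∧ M.eRk' P = 1

/-- A matroid is simple if every subset of the ground set with at most two elements
is independent (no loops and no parallel pairs). -/
def Simple' (M : Matroid α) : Prop :=
  ∀ X ⊆ M.E, X.encard ≤ 2 → M.Indep X

section A

variable {M : Matroid α} {I J X Y F G : Set α} {e x y : α}

lemma encard_le_eRk' (hI : M.Indep I) (hIX : I ⊆ X) : I.encard ≤ M.eRk' X := by
  exact le_biSup _ ⟨hI, hIX⟩

lemma eRk'_le {c : ℕ∞} (h : ∀ I, M.Indep I → I ⊆ X → I.encard ≤ c) : M.eRk' X ≤ c :=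
  iSup₂_le fun I hI => h I hI.1 hI.2

lemma IsBasis'.eRk'_eq (hI : M.IsBasis' I X) : M.eRk' X = I.encard := by
  refine le_antisymm (eRk'_le fun J hJ hJX => ?_) (encard_le_eRk' hI.indep hI.subset)
  by_contra hlt
  push_neg at hlt
  obtain ⟨e, he, hins⟩ := hI.indep.augment hJ hlt
  exact hI.insert_not_indep ⟨hJX he.1, he.2⟩ hins

lemma eRk'_mono (M : Matroid α) (h : X ⊆ Y) : M.eRk' X ≤ M.eRk' Y :=
  eRk'_le fun I hI hIX => encard_le_eRk' hI (hIX.trans h)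

lemma Indep.eRk'_eq (hI : M.Indep I) : M.eRk' I = I.encard :=
  hI.isBasis_self.isBasis'.eRk'_eq

lemma eRk'_closure_eq (M : Matroid α) (X : Set α) : M.eRk' (M.closure X) = M.eRk' X := by
  obtain ⟨I, hI⟩ := M.exists_isBasis' X
  rw [hI.isBasis_closure_right.isBasis'.eRk'_eq, hI.eRk'_eq]

lemma eRk'_le_encard (M : Matroid α) (X : Set α) : M.eRk' X ≤ X.encard :=
  eRk'_le fun _ _ h => encard_mono h

lemma eRk'_le_ground_encard (M : Matroid α) (X : Set α) : M.eRk' X ≤ M.E.encard :=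
  eRk'_le fun I hI _ => encard_mono hI.subset_ground

lemma eRk'_ne_top (M : Matroid α) [M.Finite] (X : Set α) : M.eRk' X ≠ ⊤ :=
  fun h => (h ▸ M.eRk'_le_ground_encard X).not_gt M.ground_finite.encard_lt_top |>.elim

lemma indep_of_eRk'_eq_encard (h : M.eRk' X = X.encard) (hfin : X.Finite) (hX : X ⊆ M.E) :
    M.Indep X := by
  obtain ⟨I, hI⟩ := M.exists_isBasis' X
  rw [hI.eRk'_eq] at h
  exact (hfin.eq_of_subset_of_encard_le' hI.subset h.ge) ▸ hI.indep

lemma eRk'_insert_le (M : Matroid α) (e : α) (X : Set α) :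
    M.eRk' (insert e X) ≤ M.eRk' X + 1 := by
  refine eRk'_le fun J hJ hJX => ?_
  calc J.encard ≤ (insert e (J \ {e})).encard := encard_mono (by
        intro z hz; by_cases hze : z = e; · exact hze ▸ mem_insert _ _
        · exact mem_insert_of_mem _ ⟨hz, hze⟩)
    _ ≤ (J \ {e}).encard + 1 := encard_insert_le _ _
    _ ≤ M.eRk' X + 1 := by
        refine add_le_add_left (encard_le_eRk' (hJ.subset diff_subset) ?_) 1
        intro z hz
        rcases hJX hz.1 with h | h
        · exact absurd h hz.2
        · exact h

lemma eRk'_insert_eq (he : e ∈ M.E) (hecl : e ∉ M.closure X) :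
    M.eRk' (insert e X) = M.eRk' X + 1 := by
  obtain ⟨I, hI⟩ := M.exists_isBasis' X
  have heI : e ∉ M.closure I := by rwa [hI.closure_eq_closure]
  have heI' : e ∉ I := fun h => heI (M.subset_closure I hI.indep.subset_ground h)
  have hins : M.Indep (insert e I) := by
    rw [hI.indep.insert_indep_iff]; exact Or.inl ⟨he, heI⟩
  refine le_antisymm (M.eRk'_insert_le e X) ?_
  have h2 := encard_le_eRk' hins (insert_subset_insert hI.subset)
  rwa [encard_insert_of_notMem heI', ← hI.eRk'_eq] at h2

lemma eRk'_submod (M : Matroid α) [M.Finite] (A B : Set α) (hA : A ⊆ M.E) (hB : B ⊆ M.E) :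
    M.eRk' (A ∪ B) + M.eRk' (A ∩ B) ≤ M.eRk' A + M.eRk' B := by
  obtain ⟨I, hI⟩ := M.exists_isBasis' (A ∩ B)
  obtain ⟨J, hJ, hIJ⟩ := hI.indep.subset_isBasis'_of_subset (hI.subset.trans inter_subset_left |>.trans subset_union_left)
  have hJA : (J ∩ A).encard ≤ M.eRk' A := encard_le_eRk' (hJ.indep.subset inter_subset_left) inter_subset_right
  have hJB : (J ∩ B).encard ≤ M.eRk' B := encard_le_eRk' (hJ.indep.subset inter_subset_left) inter_subset_right
  have hIcap : J ∩ (A ∩ B) = I := by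
    refine subset_antisymm (fun z hz => ?_) (subset_inter hIJ hI.subset)
    by_contra hzI
    have hzcl : z ∈ M.closure I := by
      rw [hI.closure_eq_closure]
      exact M.subset_closure (A ∩ B) (inter_subset_left.trans hA) hz.2
    have hIsub : I ⊆ J \ {z} := subset_diff_singleton hIJ hzI
    exact hJ.indep.notMem_closure_diff_of_mem hz.1 (M.closure_subset_closure hIsub hzcl)
  have hkey : (J ∩ A).encard + (J ∩ B).encard = J.encard + I.encard := by
    rw [← encard_union_add_encard_inter, ← inter_union_distrib_left,
      inter_eq_self_of_subset_left hJ.subset, ← inter_inter_distrib_left, hIcap]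
  calc M.eRk' (A ∪ B) + M.eRk' (A ∩ B) = J.encard + I.encard := by rw [hJ.eRk'_eq, hI.eRk'_eq]
    _ = (J ∩ A).encard + (J ∩ B).encard := hkey.symm
    _ ≤ M.eRk' A + M.eRk' B := add_le_add hJA hJB

end A

section B

variable {M : Matroid α} {I J X Y F G P : Set α} {e x y : α}

lemma flat_of_closure_self (h : M.closure F = F) (hF : F ⊆ M.E) : M.IsFlat F := by
  refine ⟨fun I X hIF hIX => ?_, hF⟩
  have : X ⊆ M.closure I := hIX.subset_closure
  rwa [hIF.closure_eq_closure, h] at this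

lemma closure_flat' (M : Matroid α) (X : Set α) : M.IsFlat (M.closure X) :=
  flat_of_closure_self (M.closure_closure X) (M.closure_subset_ground X)

lemma IsFlat.eq_of_subset_of_eRk'_le (hF : M.IsFlat F) (hG : M.IsFlat G) (hFG : F ⊆ G)
    (hr : M.eRk' G ≤ M.eRk' F) (hfin : M.eRk' G ≠ ⊤) : F = G := by
  obtain ⟨I, hI⟩ := M.exists_isBasis' F
  have hFG' := M.eRk'_mono hFG
  have hFfin : M.eRk' F ≠ ⊤ := fun h => hfin (top_le_iff.mp (h ▸ hFG'))
  have hGclI : G ⊆ M.closure I := by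
    intro y hyG
    by_contra hycl
    have hyclF : y ∉ M.closure F := by rw [← hI.closure_eq_closure]; exact hycl
    have hins := eRk'_insert_eq (hG.subset_ground hyG) hyclF
    have hle : M.eRk' (insert y F) ≤ M.eRk' G :=
      M.eRk'_mono (insert_subset hyG hFG)
    rw [hins] at hle
    exact ((ENat.add_one_le_iff hFfin).mp (hle.trans hr)).ne rfl
  rw [hI.closure_eq_closure, hF.closure] at hGclI
  exact hFG.antisymm hGclI

lemma IsFlat.eRk'_add_one_le (hF : M.IsFlat F) (hG : M.IsFlat G) (hFG : F ⊂ G) :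
    M.eRk' F + 1 ≤ M.eRk' G := by
  obtain ⟨y, hyG, hyF⟩ := exists_of_ssubset hFG
  have : M.eRk' (insert y F) ≤ M.eRk' G := M.eRk'_mono (insert_subset hyG hFG.subset)
  rwa [eRk'_insert_eq (hG.subset_ground hyG) (by rwa [hF.closure])] at this

lemma IsFlat.eq_ground_of_eRk'_ge (hF : M.IsFlat F) (hr : M.eRk' M.E ≤ M.eRk' F)
    (hfin : M.eRk' M.E ≠ ⊤) : F = M.E :=
  hF.eq_of_subset_of_eRk'_le M.ground_isFlat hF.subset_ground hr hfin

/-- two distinct covers of a corank-≥2 flat -/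
lemma IsFlat.exists_two_covers (hF : M.IsFlat F) (hr : M.eRk' F + 2 ≤ M.eRk' M.E)
    (hfin : M.eRk' M.E ≠ ⊤) :
    ∃ F₁ F₂, M.IsFlat F₁ ∧ M.IsFlat F₂ ∧ F ⊂ F₁ ∧ F ⊂ F₂ ∧
      M.eRk' F₁ = M.eRk' F + 1 ∧ M.eRk' F₂ = M.eRk' F + 1 ∧ F₁ ≠ F₂ := by
  have hFfin : M.eRk' F ≠ ⊤ := fun h => by
    rw [h, top_add] at hr; exact hfin (top_le_iff.mp hr)
  have hFne : F ≠ M.E := by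
    intro h
    rw [← h] at hr
    have h2 : M.eRk' F + 2 ≤ M.eRk' F + 0 := by rwa [add_zero]
    have := (WithTop.add_le_add_iff_left hFfin).mp h2
    exact (not_le.mpr (by norm_num : (0:ℕ∞) < 2)) this
  obtain ⟨x, hxE, hxF⟩ := exists_of_ssubset (hF.subset_ground.ssubset_of_ne hFne)
  set F₁ := M.closure (insert x F) with hF₁def
  have hF₁ : M.IsFlat F₁ := M.closure_flat' _
  have hFF₁ : F ⊆ F₁ := (subset_insert _ _).trans (M.subset_closure _ (insert_subset hxE hF.subset_ground))
  have hxF₁ : x ∈ F₁ := M.subset_closure _ (insert_subset hxE hF.subset_ground) (mem_insert _ _)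
  have hr₁ : M.eRk' F₁ = M.eRk' F + 1 := by
    rw [hF₁def, eRk'_closure_eq, eRk'_insert_eq hxE (by rwa [hF.closure])]
  have hF₁ne : F₁ ≠ M.E := by
    intro h
    rw [← h, hr₁] at hr
    have h2 : (2:ℕ∞) ≤ 1 := by
      have h3 : M.eRk' F + 2 ≤ M.eRk' F + 1 := hr
      exact (WithTop.add_le_add_iff_left hFfin).mp h3
    norm_num at h2
  obtain ⟨y, hyE, hyF₁⟩ := exists_of_ssubset (hF₁.subset_ground.ssubset_of_ne hF₁ne)
  set F₂ := M.closure (insert y F) with hF₂def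
  have hyF : y ∉ F := fun h => hyF₁ (hFF₁ h)
  have hF₂ : M.IsFlat F₂ := M.closure_flat' _
  have hFF₂ : F ⊆ F₂ := (subset_insert _ _).trans (M.subset_closure _ (insert_subset hyE hF.subset_ground))
  have hyF₂ : y ∈ F₂ := M.subset_closure _ (insert_subset hyE hF.subset_ground) (mem_insert _ _)
  refine ⟨F₁, F₂, hF₁, hF₂, ssubset_of_ne_of_subset (fun h => hxF (h ▸ hxF₁)) hFF₁,
    ssubset_of_ne_of_subset (fun h => hyF (h ▸ hyF₂)) hFF₂, hr₁, ?_, fun h => hyF₁ (h ▸ hyF₂)⟩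
  rw [hF₂def, eRk'_closure_eq, eRk'_insert_eq hyE (by rwa [hF.closure])]

end B

section SimpleSec

variable {M : Matroid α} {P F S X : Set α} {x y : α}

lemma Simple'.indep_singleton (h : M.Simple') (hx : x ∈ M.E) : M.Indep {x} :=
  h {x} (singleton_subset_iff.mpr hx) (by simp)

lemma Simple'.closure_singleton (h : M.Simple') (hx : x ∈ M.E) : M.closure {x} = {x} := by
  refine subset_antisymm (fun y hy => ?_) (M.subset_closure _ (singleton_subset_iff.mpr hx))
  by_contra hyx
  have hyE : y ∈ M.E := M.closure_subset_ground _ hy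
  have hne : y ≠ x := fun h => hyx (h ▸ rfl)
  have hpair : M.Indep {x, y} := h _ (insert_subset hx (singleton_subset_iff.mpr hyE))
    (by rw [encard_pair hne.symm])
  have hymem : y ∈ ({x, y} : Set α) := by simp
  have := hpair.notMem_closure_diff_of_mem hymem
  apply this
  have hd : ({x, y} : Set α) \ {y} = {x} := by
    ext z
    simp only [mem_diff, mem_insert_iff, mem_singleton_iff]
    constructor
    · rintro ⟨(rfl | rfl), hz⟩
      · rfl
      · exact absurd rfl hz
    · rintro rfl
      exact ⟨Or.inl rfl, fun h => hne h.symm⟩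
  rwa [hd]

lemma Simple'.closure_empty (h : M.Simple') : M.closure ∅ = ∅ := by
  ext y
  simp only [mem_empty_iff_false, iff_false]
  intro hy
  have hyE : y ∈ M.E := M.closure_subset_ground _ hy
  have := (h.indep_singleton hyE).notMem_closure_diff_of_mem (rfl : y ∈ ({y} : Set α))
  apply this
  have : ({y} : Set α) \ {y} = ∅ := by simp
  rwa [this]

lemma Simple'.eq_empty_of_eRk'_zero (h : M.Simple') (hP : P ⊆ M.E) (hr : M.eRk' P = 0) :
    P = ∅ := by
  rw [eq_empty_iff_forall_notMem]
  intro x hx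
  have := encard_le_eRk' (h.indep_singleton (hP hx)) (singleton_subset_iff.mpr hx)
  rw [hr, encard_singleton] at this
  norm_num at this

lemma Simple'.point_iff (h : M.Simple') : M.Point' P ↔ ∃ x ∈ M.E, P = {x} := by
  constructor
  · rintro ⟨hP, hr⟩
    obtain ⟨I, hI⟩ := M.exists_isBasis' P
    rw [hI.eRk'_eq] at hr
    obtain ⟨x, rfl⟩ := encard_eq_one.mp hr
    have hxP : x ∈ P := hI.subset rfl
    refine ⟨x, hP.subset_ground hxP, subset_antisymm (fun y hy => ?_) (singleton_subset_iff.mpr hxP)⟩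
    by_contra hyx
    have hyne : y ≠ x := hyx
    have hpair : M.Indep {x, y} := h _ (insert_subset (hP.subset_ground hxP)
      (singleton_subset_iff.mpr (hP.subset_ground hy))) (by rw [encard_pair hyne.symm])
    have := encard_le_eRk' hpair (insert_subset hxP (singleton_subset_iff.mpr hy))
    rw [encard_pair hyne.symm, hI.eRk'_eq, hr] at this
    norm_num at this
  · rintro ⟨x, hx, rfl⟩
    exact ⟨flat_of_closure_self (h.closure_singleton hx) (singleton_subset_iff.mpr hx),
      by rw [(h.indep_singleton hx).eRk'_eq, encard_singleton]⟩

lemma Simple'.restrict (h : M.Simple') (hS : S ⊆ M.E) : (M ↾ S).Simple' := by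
  intro X hX hcard
  rw [restrict_ground_eq] at hX
  exact restrict_indep_iff.mpr ⟨h X (hX.trans hS) hcard, hX⟩

end SimpleSec

section RestrictSec

variable {M : Matroid α} {R X F G : Set α}

lemma restrict_eRk'_eq (M : Matroid α) (hXR : X ⊆ R) : (M ↾ R).eRk' X = M.eRk' X := by
  refine le_antisymm (eRk'_le fun I hI hIX => encard_le_eRk' (restrict_indep_iff.mp hI).1 hIX)
    (eRk'_le fun I hI hIX => encard_le_eRk' (restrict_indep_iff.mpr ⟨hI, hIX.trans hXR⟩) hIX)

lemma restrict_closure_eq'' (M : Matroid α) (hXR : X ⊆ R) (hR : R ⊆ M.E) :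
    (M ↾ R).closure X = M.closure X ∩ R := by
  obtain ⟨I, hI⟩ := (M ↾ R).exists_isBasis' X
  have hIM : M.IsBasis' I X := by
    have h2 := (isBasis'_restrict_iff.mp hI).1
    rwa [inter_eq_self_of_subset_left hXR] at h2
  rw [← hI.closure_eq_closure, ← hIM.closure_eq_closure]
  have hIi := hI.indep
  have hIMi := hIM.indep
  ext y
  rw [mem_inter_iff, hIi.mem_closure_iff', hIMi.mem_closure_iff', restrict_indep_iff,
    restrict_ground_eq]
  constructor
  · rintro ⟨hyR, himp⟩
    exact ⟨⟨hR hyR, fun hind => himp ⟨hind, insert_subset hyR (hIM.subset.trans hXR)⟩⟩, hyR⟩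
  · rintro ⟨⟨hyE, himp⟩, hyR⟩
    exact ⟨hyR, fun hind => himp hind.1⟩

lemma IsFlat.inter_restrict (hG : M.IsFlat G) (hR : R ⊆ M.E) : (M ↾ R).IsFlat (G ∩ R) := by
  refine flat_of_closure_self ?_ (by rw [restrict_ground_eq]; exact inter_subset_right)
  refine subset_antisymm ?_ ((M ↾ R).subset_closure _ (by rw [restrict_ground_eq]; exact inter_subset_right))
  rw [restrict_closure_eq'' M inter_subset_right hR]
  exact inter_subset_inter_left R ((M.closure_subset_closure inter_subset_left).trans hG.closure.subset)

lemma IsFlat.restrict_eq (hF : (M ↾ R).IsFlat F) (hR : R ⊆ M.E) : F = M.closure F ∩ R := by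
  have h1 := hF.closure
  rwa [restrict_closure_eq'' M (hF.subset_ground.trans_eq (restrict_ground_eq ..)) hR, eq_comm] at h1

end RestrictSec

/-- Deletion of a set from a matroid. -/
def delete' (M : Matroid α) (D : Set α) : Matroid α := M ↾ (M.E \ D)

/-- Contraction of a set in a matroid, defined by duality. -/
def contract' (M : Matroid α) (C : Set α) : Matroid α := (M✶.delete' C)✶

section ContractSec

variable {M : Matroid α} {C X F I J : Set α}

@[simp] lemma delete'_ground (M : Matroid α) (D : Set α) : (M.delete' D).E = M.E \ D := rfl

@[simp] lemma contract'_ground (M : Matroid α) (C : Set α) : (M.contract' C).E = M.E \ C := rfl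

lemma contract'_indep_iff [M.Finite] (hJ : M.IsBasis' J (C ∩ M.E)) :
    (M.contract' C).Indep X ↔ X ⊆ M.E \ C ∧ M.Indep (X ∪ J) := by
  have hCE : C ∩ M.E ⊆ M.E := inter_subset_right
  have hRE : M.E \ C ⊆ M.E := diff_subset
  have hJC : J ⊆ C ∩ M.E := hJ.subset
  constructor
  · intro hX
    have hXE : X ⊆ M.E \ C := hX.subset_ground.trans_eq (contract'_ground ..)
    rw [contract', delete'] at hX
    rw [dual_indep_iff_exists' ] at hX
    obtain ⟨-, B', hB', hXB'⟩ := hX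
    have hB'R : (M✶ ↾ (M.E \ C)).IsBase B' := hB'
    rw [isBase_restrict_iff (show M.E \ C ⊆ M✶.E by rw [dual_ground]; exact hRE)] at hB'R
    obtain ⟨B, hB, hB'B⟩ := hB'R.indep.exists_isBase_superset
    have hBint : B ∩ (M.E \ C) = B' :=
      (hB'R.eq_of_subset_indep (hB.indep.subset inter_subset_left)
        (subset_inter hB'B hB'R.subset) inter_subset_right).symm
    have hBbasis : M✶.IsBasis (B ∩ (M.E \ C)) (M.E \ C) := hBint ▸ hB'R
    have hkey := hB.compl_inter_isBasis_of_inter_isBasis hBbasis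
    rw [dual_dual, dual_ground] at hkey
    have hEdiff : M.E \ (M.E \ C) = C ∩ M.E := by
      rw [diff_diff_right_self, inter_comm]
    rw [hEdiff] at hkey
    set J' := (M.E \ B) ∩ (C ∩ M.E) with hJ'def
    have hB0 : M.IsBase (M.E \ B) := hB.compl_isBase_of_dual
    have hXB : X ⊆ M.E \ B := by
      intro z hz
      refine ⟨(hXE hz).1, fun hzB => ?_⟩
      have : z ∈ B ∩ (M.E \ C) := ⟨hzB, hXE hz⟩
      rw [hBint] at this
      exact (disjoint_left.mp hXB' hz) this
    have hXJ' : M.Indep (X ∪ J') :=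
      hB0.indep.subset (union_subset hXB inter_subset_left)
    refine ⟨hXE, ?_⟩
    -- transfer from J' to J
    have hJ'b : M.IsBasis' J' (C ∩ M.E) := hkey.isBasis'
    have hdisj : Disjoint X (C ∩ M.E) := disjoint_left.mpr (fun z hz hz2 => (hXE hz).2 hz2.1)
    have hdisjJ : Disjoint X J := hdisj.mono_right hJC
    have hdisjJ' : Disjoint X J' := hdisj.mono_right hJ'b.subset
    have hclosure : M.closure (X ∪ J) = M.closure (X ∪ J') := by
      rw [← closure_union_closure_right_eq, hJ.closure_eq_closure,
        ← closure_union_closure_right_eq (Y := J'), hJ'b.closure_eq_closure]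
    have hcard : M.eRk' (X ∪ J) = (X ∪ J).encard := by
      rw [← eRk'_closure_eq, hclosure, eRk'_closure_eq, hXJ'.eRk'_eq,
        encard_union_eq hdisjJ', encard_union_eq hdisjJ, hJ.encard_eq_encard hJ'b]
    exact indep_of_eRk'_eq_encard hcard
      (M.ground_finite.subset (union_subset (hXE.trans hRE) (hJC.trans hCE)))
      (union_subset (hXE.trans hRE) (hJC.trans hCE))
  · rintro ⟨hXE, hXJ⟩
    obtain ⟨B, hB, hXJB⟩ := hXJ.exists_isBase_superset
    have hJB : J ⊆ B := subset_union_right.trans hXJB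
    have hJBC : J = B ∩ (C ∩ M.E) :=
      hJ.eq_of_subset_indep (hB.indep.subset inter_subset_left)
        (subset_inter hJB hJC) inter_subset_right
    have hJbasis : M.IsBasis (B ∩ (C ∩ M.E)) (C ∩ M.E) := by
      rw [← hJBC]; exact (hJ.isBasis hCE)
    have hkey := hB.compl_inter_isBasis_of_inter_isBasis hJbasis
    have hEdiff : M.E \ (C ∩ M.E) = M.E \ C := diff_inter_self_eq_diff
    rw [hEdiff] at hkey
    rw [contract', delete']
    rw [dual_indep_iff_exists (by rw [restrict_ground_eq]; exact hXE)]
    refine ⟨(M.E \ B) ∩ (M.E \ C), ?_, ?_⟩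
    · rw [dual_ground]
      rw [isBase_restrict_iff (show M.E \ C ⊆ M✶.E by rw [dual_ground]; exact hRE)]
      exact hkey
    · exact disjoint_left.mpr fun z hz hz2 => hz2.1.2 (hXJB (Or.inl hz))

end ContractSec

section ContractSec2

variable {M : Matroid α} {C X F I J : Set α}

lemma contract'_aux_basis [M.Finite] (hJ : M.IsBasis' J (C ∩ M.E))
    (hX : X ⊆ M.E \ C) (hI : (M.contract' C).IsBasis' I X) :
    M.IsBasis (I ∪ J) (X ∪ (C ∩ M.E)) := by
  have hIX := hI.subset
  have hIE : I ⊆ M.E \ C := hIX.trans hX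
  have hind : M.Indep (I ∪ J) := ((contract'_indep_iff hJ).mp hI.indep).2
  refine hind.isBasis_of_subset_of_subset_closure (union_subset_union hIX hJ.subset) ?_
  rintro y (hyX | hyC)
  · by_cases hyI : y ∈ I
    · exact M.subset_closure _ hind.subset_ground (Or.inl hyI)
    have hnind : ¬ (M.contract' C).Indep (insert y I) := hI.insert_not_indep ⟨hyX, hyI⟩
    rw [contract'_indep_iff hJ, insert_union] at hnind
    push_neg at hnind
    have hni := hnind (insert_subset (hX hyX) hIE)
    rw [hind.mem_closure_iff]
    exact Or.inl ⟨fun h => hni h, insert_subset ((hX hyX).1) hind.subset_ground⟩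
  · by_cases hyJ : y ∈ J
    · exact M.subset_closure _ hind.subset_ground (Or.inr hyJ)
    have hnind := hJ.insert_not_indep ⟨hyC, hyJ⟩
    rw [hind.mem_closure_iff]
    refine Or.inl ⟨fun h => hnind (h.subset ?_), insert_subset hyC.2 hind.subset_ground⟩
    exact insert_subset_insert subset_union_right

lemma contract'_eRk'_add [M.Finite] (hX : X ⊆ M.E \ C) :
    (M.contract' C).eRk' X + M.eRk' (C ∩ M.E) = M.eRk' (X ∪ (C ∩ M.E)) := by
  obtain ⟨J, hJ⟩ := M.exists_isBasis' (C ∩ M.E)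
  obtain ⟨I, hI⟩ := (M.contract' C).exists_isBasis' X
  have hb := contract'_aux_basis hJ hX hI
  have hdisj : Disjoint I J :=
    disjoint_left.mpr fun z hz hz2 => ((hI.subset.trans hX) hz).2 (hJ.subset hz2).1
  rw [hb.isBasis'.eRk'_eq, hI.eRk'_eq, hJ.eRk'_eq, encard_union_eq hdisj]

lemma contract'_closure_eq [M.Finite] (hX : X ⊆ M.E \ C) :
    (M.contract' C).closure X = M.closure (X ∪ (C ∩ M.E)) \ C := by
  obtain ⟨J, hJ⟩ := M.exists_isBasis' (C ∩ M.E)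
  obtain ⟨I, hI⟩ := (M.contract' C).exists_isBasis' X
  have hb := contract'_aux_basis hJ hX hI
  have hind : M.Indep (I ∪ J) := hb.indep
  rw [← hI.closure_eq_closure, ← hb.closure_eq_closure]
  ext y
  rw [mem_diff, hI.indep.mem_closure_iff', hind.mem_closure_iff', contract'_indep_iff hJ,
    contract'_ground, insert_union]
  constructor
  · rintro ⟨⟨hyE, hyC⟩, himp⟩
    refine ⟨⟨hyE, fun hins => ?_⟩, hyC⟩
    rcases himp ⟨insert_subset ⟨hyE, hyC⟩ (hI.subset.trans hX), hins⟩ with h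
    exact Or.inl h
  · rintro ⟨⟨hyE, himp⟩, hyC⟩
    refine ⟨⟨hyE, hyC⟩, fun h => ?_⟩
    rcases himp h.2 with (h1 | h1)
    · exact h1
    · exact absurd (hJ.subset h1).1 hyC

lemma contract'_flat_of_flat [M.Finite] (hF : M.IsFlat F) (hCF : M.closure (C ∩ M.E) ⊆ F) :
    (M.contract' C).IsFlat (F \ C) ∧ M.closure ((F \ C) ∪ (C ∩ M.E)) = F := by
  have hsub : (F \ C) ∪ (C ∩ M.E) ⊆ F := union_subset diff_subset
    ((M.subset_closure _ inter_subset_right).trans hCF)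
  have hcl : M.closure ((F \ C) ∪ (C ∩ M.E)) = F := by
    refine subset_antisymm ((M.closure_subset_closure hsub).trans hF.closure.subset) ?_
    intro y hyF
    by_cases hyC : y ∈ C
    · exact M.subset_closure _ (hsub.trans hF.subset_ground) (Or.inr ⟨hyC, hF.subset_ground hyF⟩)
    · exact M.subset_closure _ (hsub.trans hF.subset_ground) (Or.inl ⟨hyF, hyC⟩)
  have hFC : F \ C ⊆ M.E \ C := diff_subset_diff_left hF.subset_ground
  refine ⟨flat_of_closure_self ?_ (by rw [contract'_ground]; exact hFC), hcl⟩
  rw [contract'_closure_eq hFC, hcl]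

lemma flat_of_contract'_flat [M.Finite] (hX : (M.contract' C).IsFlat X) :
    M.IsFlat (M.closure (X ∪ (C ∩ M.E))) ∧ M.closure (C ∩ M.E) ⊆ M.closure (X ∪ (C ∩ M.E)) ∧
      X = M.closure (X ∪ (C ∩ M.E)) \ C := by
  have hXE : X ⊆ M.E \ C := hX.subset_ground.trans_eq (contract'_ground ..)
  refine ⟨M.closure_flat' _, M.closure_subset_closure subset_union_right, ?_⟩
  rw [← contract'_closure_eq hXE, hX.closure]

end ContractSec2

/-- `φ` is an adjoint map from `M` to `M'` : `M'` is simple of the same rank as `M`,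
`φ` maps flats of `M` to flats of `M'` injectively, reversing inclusion, and restricts
to a bijection from the hyperplanes of `M` onto the points of `M'`. -/
def IsAdjointMap (M : Matroid α) (M' : Matroid β) (φ : Set α → Set β) : Prop :=
  M'.Simple' ∧ M'.eRk' M'.E = M.eRk' M.E ∧
  (∀ F, M.IsFlat F → M'.IsFlat (φ F)) ∧
  (∀ ⦃F₁ F₂⦄, M.IsFlat F₁ → M.IsFlat F₂ → φ F₁ = φ F₂ → F₁ = F₂) ∧
  (∀ ⦃F₁ F₂⦄, M.IsFlat F₁ → M.IsFlat F₂ → F₁ ⊆ F₂ → φ F₂ ⊆ φ F₁) ∧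
  (∀ H, M.Hyperplane' H → M'.Point' (φ H)) ∧
  (∀ P, M'.Point' P → ∃ H, M.Hyperplane' H ∧ φ H = P)

section AdjointSec

variable {N : Matroid α} {M' : Matroid β} {φ : Set α → Set β} {F G H X Z R : Set α}

lemma IsAdjointMap.simple (h : IsAdjointMap N M' φ) : M'.Simple' := h.1
lemma IsAdjointMap.rank_eq (h : IsAdjointMap N M' φ) : M'.eRk' M'.E = N.eRk' N.E := h.2.1
lemma IsAdjointMap.flat (h : IsAdjointMap N M' φ) : ∀ F, N.IsFlat F → M'.IsFlat (φ F) := h.2.2.1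
lemma IsAdjointMap.inj (h : IsAdjointMap N M' φ) :
    ∀ ⦃F₁ F₂⦄, N.IsFlat F₁ → N.IsFlat F₂ → φ F₁ = φ F₂ → F₁ = F₂ := h.2.2.2.1
lemma IsAdjointMap.rev (h : IsAdjointMap N M' φ) :
    ∀ ⦃F₁ F₂⦄, N.IsFlat F₁ → N.IsFlat F₂ → F₁ ⊆ F₂ → φ F₂ ⊆ φ F₁ := h.2.2.2.2.1
lemma IsAdjointMap.point (h : IsAdjointMap N M' φ) :
    ∀ H, N.Hyperplane' H → M'.Point' (φ H) := h.2.2.2.2.2.1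
lemma IsAdjointMap.surj (h : IsAdjointMap N M' φ) :
    ∀ P, M'.Point' P → ∃ H, N.Hyperplane' H ∧ φ H = P := h.2.2.2.2.2.2

lemma IsAdjointMap.eRk'_flat_ne_top (h : IsAdjointMap N M' φ) [N.Finite] {F' : Set β}
    (hF : F' ⊆ M'.E) : M'.eRk' F' ≠ ⊤ := by
  intro ht
  have hle := M'.eRk'_mono hF
  rw [ht, top_le_iff, h.rank_eq] at hle
  exact N.eRk'_ne_top N.E hle

lemma IsAdjointMap.eRk'_phi_add (h : IsAdjointMap N M' φ) [N.Finite] (hF : N.IsFlat F) :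
    M'.eRk' (φ F) + N.eRk' F = N.eRk' N.E := by
  have hfinE : N.eRk' N.E ≠ ⊤ := N.eRk'_ne_top N.E
  have lower : ∀ k : ℕ, ∀ F, N.IsFlat F → N.eRk' F + k = N.eRk' N.E → (k:ℕ∞) ≤ M'.eRk' (φ F) := by
    intro k
    induction k with
    | zero => intro F hF _; simp
    | succ k ih =>
      intro F hF hFk
      have hFfin : N.eRk' F ≠ ⊤ := N.eRk'_ne_top F
      have hFne : F ≠ N.E := by
        intro hEq
        rw [hEq] at hFk
        nth_rewrite 2 [← add_zero (N.eRk' N.E)] at hFk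
        have := WithTop.add_left_cancel hfinE hFk
        exact (Nat.succ_ne_zero k) (WithTop.coe_eq_zero.mp this)
      obtain ⟨x, hxE, hxF⟩ := exists_of_ssubset (hF.subset_ground.ssubset_of_ne hFne)
      set F' := N.closure (insert x F) with hF'def
      have hF' : N.IsFlat F' := N.closure_flat' _
      have hF'r : N.eRk' F' = N.eRk' F + 1 := by
        rw [hF'def, eRk'_closure_eq, eRk'_insert_eq hxE (by rwa [hF.closure])]
      have hFk' : N.eRk' F' + k = N.eRk' N.E := by
        rw [hF'r, ← hFk]; push_cast; ring
      have hksub := ih F' hF' hFk'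
      have hFF' : F ⊆ F' := (subset_insert _ _).trans
        (N.subset_closure _ (insert_subset hxE hF.subset_ground))
      have hxF' : x ∈ F' := N.subset_closure _ (insert_subset hxE hF.subset_ground) (mem_insert _ _)
      have hss : φ F' ⊂ φ F :=
        (h.rev hF hF' hFF').ssubset_of_ne (fun he => hxF ((h.inj hF' hF he) ▸ hxF'))
      have hstep := IsFlat.eRk'_add_one_le (h.flat _ hF') (h.flat _ hF) hss
      calc ((k+1 : ℕ):ℕ∞) = (k:ℕ∞) + 1 := by push_cast; ring
        _ ≤ M'.eRk' (φ F') + 1 := add_le_add_left hksub 1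
        _ ≤ M'.eRk' (φ F) := hstep
  have upper : ∀ k : ℕ, ∀ F, N.IsFlat F → N.eRk' F = k → M'.eRk' (φ F) + k ≤ N.eRk' N.E := by
    intro k
    induction k with
    | zero =>
      intro F hF _
      rw [Nat.cast_zero, add_zero, ← h.rank_eq]
      exact M'.eRk'_mono (h.flat _ hF).subset_ground
    | succ k ih =>
      intro F hF hFk
      obtain ⟨I, hI⟩ := N.exists_isBasis' F
      rw [hI.eRk'_eq] at hFk
      have hIne : I.Nonempty := by
        rw [← encard_ne_zero, hFk]
        exact_mod_cast Nat.succ_ne_zero k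
      obtain ⟨x, hxI⟩ := hIne
      set F₂ := N.closure (I \ {x}) with hF₂def
      have hF₂ : N.IsFlat F₂ := N.closure_flat' _
      have hF₂r : N.eRk' F₂ = (k:ℕ∞) := by
        rw [hF₂def, eRk'_closure_eq, (hI.indep.subset diff_subset).eRk'_eq]
        have := encard_diff_singleton_add_one hxI
        rw [hFk] at this
        have h2 : (I \ {x}).encard + 1 = (k:ℕ∞) + 1 := by rw [this]; push_cast; ring
        exact WithTop.add_right_cancel ENat.one_ne_top h2
      have hF₂F : F₂ ⊆ F := by
        rw [hF₂def]
        exact (N.closure_subset_closure diff_subset).trans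
          (hI.closure_eq_closure.trans_subset hF.closure.subset)
      have hne : F₂ ≠ F := by
        intro hEq
        have hF2' : N.eRk' F = (k:ℕ∞) := hEq ▸ hF₂r
        have hF1' : N.eRk' F = ((k+1:ℕ):ℕ∞) := by rw [hI.eRk'_eq, hFk]
        have : (k:ℕ∞) = ((k+1:ℕ):ℕ∞) := hF2'.symm.trans hF1'
        have : k = k + 1 := by exact_mod_cast this
        omega
      have hss : φ F ⊂ φ F₂ :=
        (h.rev hF₂ hF hF₂F).ssubset_of_ne (fun he => hne (h.inj hF₂ hF he.symm))
      have hstep := IsFlat.eRk'_add_one_le (h.flat _ hF) (h.flat _ hF₂) hss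
      have hihF₂ := ih F₂ hF₂ hF₂r
      calc M'.eRk' (φ F) + ((k+1:ℕ):ℕ∞) = (M'.eRk' (φ F) + 1) + (k:ℕ∞) := by push_cast; ring
        _ ≤ M'.eRk' (φ F₂) + (k:ℕ∞) := add_le_add_left hstep _
        _ ≤ N.eRk' N.E := hihF₂
  have hFfin : N.eRk' F ≠ ⊤ := N.eRk'_ne_top F
  have hn : ((N.eRk' F).toNat : ℕ∞) = N.eRk' F := ENat.coe_toNat hFfin
  have hle := N.eRk'_mono hF.subset_ground
  obtain ⟨c, hc⟩ := exists_add_of_le hle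
  have hcfin : c ≠ ⊤ := fun hct => hfinE (by rw [hc, hct, add_top])
  have hm : ((c.toNat : ℕ) : ℕ∞) = c := ENat.coe_toNat hcfin
  refine le_antisymm ?_ ?_
  · have := upper (N.eRk' F).toNat F hF hn.symm
    rwa [hn] at this
  · have := lower c.toNat F hF (by rw [hm, ← hc])
    rw [hc, ← hm, add_comm]
    exact add_le_add_left this _

end AdjointSec

section AdjointSec2

variable {N : Matroid α} {M' : Matroid β} {φ : Set α → Set β} {F G H X Z R : Set α}

lemma IsAdjointMap.exists_phi_singleton (h : IsAdjointMap N M' φ) (hH : N.Hyperplane' H) :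
    ∃ p, p ∈ M'.E ∧ φ H = {p} := by
  obtain ⟨x, hx, hphi⟩ := h.simple.point_iff.mp (h.point H hH)
  exact ⟨x, hx, hphi⟩

lemma IsAdjointMap.exists_hyp_of_ground (h : IsAdjointMap N M' φ) {x : β} (hx : x ∈ M'.E) :
    ∃ H, N.Hyperplane' H ∧ φ H = {x} :=
  h.surj {x} (h.simple.point_iff.mpr ⟨x, hx, rfl⟩)

lemma IsAdjointMap.finite (h : IsAdjointMap N M' φ) [N.Finite] : M'.Finite := by
  have hhyp : {H | N.Hyperplane' H}.Finite :=
    N.ground_finite.finite_subsets.subset (fun H hH => hH.1.subset_ground)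
  have hfin : (⋃ H ∈ {H | N.Hyperplane' H}, φ H).Finite := by
    refine hhyp.biUnion (fun H hH => ?_)
    obtain ⟨p, -, hp⟩ := h.exists_phi_singleton hH
    rw [hp]; exact finite_singleton p
  refine ⟨hfin.subset fun x hx => ?_⟩
  obtain ⟨H, hH, hphi⟩ := h.exists_hyp_of_ground hx
  exact mem_biUnion hH (by rw [hphi]; exact rfl)

lemma IsAdjointMap.phi_ground_eq (h : IsAdjointMap N M' φ) [N.Finite] : φ N.E = ∅ := by
  have h1 := h.eRk'_phi_add N.ground_isFlat
  nth_rewrite 2 [← zero_add (N.eRk' N.E)] at h1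
  have h2 := WithTop.add_right_cancel (N.eRk'_ne_top N.E) h1
  exact h.simple.eq_empty_of_eRk'_zero (h.flat _ N.ground_isFlat).subset_ground h2

lemma IsAdjointMap.eRk'_phi_hyp (h : IsAdjointMap N M' φ) [N.Finite] (hR : R ⊆ N.E)
    (hX : (N ↾ R).Hyperplane' X) :
    M'.eRk' (φ (N.closure X)) = M'.eRk' (φ (N.closure R)) + 1 := by
  have hXR : X ⊆ R := hX.1.subset_ground.trans_eq (restrict_ground_eq ..)
  have hFX := h.eRk'_phi_add (N.closure_flat' X)
  rw [eRk'_closure_eq] at hFX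
  have hFR := h.eRk'_phi_add (N.closure_flat' R)
  rw [eRk'_closure_eq] at hFR
  have hhyp : N.eRk' X + 1 = N.eRk' R := by
    have h2 := hX.2
    rwa [restrict_eRk'_eq _ hXR, restrict_ground_eq, restrict_eRk'_eq _ (subset_refl R)] at h2
  have hcomb : M'.eRk' (φ (N.closure X)) + N.eRk' X
      = (M'.eRk' (φ (N.closure R)) + 1) + N.eRk' X := by
    rw [hFX, ← hFR, ← hhyp]; ring
  exact WithTop.add_right_cancel (N.eRk'_ne_top X) hcomb

lemma IsAdjointMap.closure_insert_q (h : IsAdjointMap N M' φ) [N.Finite] (hR : R ⊆ N.E)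
    (hX : (N ↾ R).Hyperplane' X) {q : β}
    (hq : q ∈ φ (N.closure X) \ φ (N.closure R)) :
    M'.closure (insert q (φ (N.closure R))) = φ (N.closure X) := by
  have hXR : X ⊆ R := hX.1.subset_ground.trans_eq (restrict_ground_eq ..)
  have hTflat : M'.IsFlat (φ (N.closure R)) := h.flat _ (N.closure_flat' R)
  have hXflat : M'.IsFlat (φ (N.closure X)) := h.flat _ (N.closure_flat' X)
  have hTsub : φ (N.closure R) ⊆ φ (N.closure X) :=
    h.rev (N.closure_flat' X) (N.closure_flat' R) (N.closure_subset_closure hXR)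
  have hqE : q ∈ M'.E := hXflat.subset_ground hq.1
  have hins : insert q (φ (N.closure R)) ⊆ φ (N.closure X) := insert_subset hq.1 hTsub
  have hr : M'.eRk' (insert q (φ (N.closure R))) = M'.eRk' (φ (N.closure R)) + 1 :=
    eRk'_insert_eq hqE (by rw [hTflat.closure]; exact hq.2)
  refine IsFlat.eq_of_subset_of_eRk'_le (M'.closure_flat' _) hXflat
    ((M'.closure_subset_closure hins).trans hXflat.closure.subset) ?_
    (h.eRk'_flat_ne_top hXflat.subset_ground)
  rw [eRk'_closure_eq, hr, h.eRk'_phi_hyp hR hX]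

lemma IsAdjointMap.key (h : IsAdjointMap N M' φ) [N.Finite] (hR : R ⊆ N.E) (q : Set α → β)
    (hq : ∀ X, (N ↾ R).Hyperplane' X → q X ∈ φ (N.closure X) \ φ (N.closure R))
    (hZ : (N ↾ R).IsFlat Z) :
    M'.closure (φ (N.closure R) ∪ q '' {X | (N ↾ R).Hyperplane' X ∧ Z ⊆ X})
      = φ (N.closure Z) := by
  haveI hNR : (N ↾ R).Finite := ⟨by rw [restrict_ground_eq]; exact N.ground_finite.subset hR⟩
  have hTflat : M'.IsFlat (φ (N.closure R)) := h.flat _ (N.closure_flat' R)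
  have claim : ∀ k : ℕ, ∀ Z, (N ↾ R).IsFlat Z → (N ↾ R).eRk' Z + k = (N ↾ R).eRk' R →
      M'.closure (φ (N.closure R) ∪ q '' {X | (N ↾ R).Hyperplane' X ∧ Z ⊆ X})
        = φ (N.closure Z) := by
    intro k
    induction k using Nat.strong_induction_on with
    | _ k ih =>
    intro Z hZ hk
    have hZR : Z ⊆ R := hZ.subset_ground.trans_eq (restrict_ground_eq ..)
    have hgr : ((N ↾ R).E : Set α) = R := restrict_ground_eq ..
    match k, ih with
    | 0, ih =>
      have hZeq : Z = R := by
        have := hZ.eq_ground_of_eRk'_ge (M := N ↾ R) ?_ ((N ↾ R).eRk'_ne_top _)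
        · rwa [hgr] at this
        · rw [hgr, ← hk, Nat.cast_zero, add_zero]
      rw [hZeq]
      have hempty : {X | (N ↾ R).Hyperplane' X ∧ R ⊆ X} = ∅ := by
        ext X
        simp only [mem_setOf_eq, mem_empty_iff_false, iff_false, not_and]
        intro hX hRX
        have hXR' : X ⊆ R := hX.1.subset_ground.trans_eq hgr
        have hXeq : X = R := hXR'.antisymm hRX
        have h2 := hX.2
        rw [hXeq, hgr] at h2
        nth_rewrite 2 [← add_zero ((N ↾ R).eRk' R)] at h2
        have h3 := WithTop.add_left_cancel ((N ↾ R).eRk'_ne_top R) h2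
        exact (by norm_num : (1:ℕ∞) ≠ 0) h3
      rw [hempty, image_empty, union_empty, hTflat.closure]
    | 1, ih =>
      have hhypZ : (N ↾ R).Hyperplane' Z := ⟨hZ, by rw [hgr, ← hk, Nat.cast_one]⟩
      have himg : q '' {X | (N ↾ R).Hyperplane' X ∧ Z ⊆ X} = {q Z} := by
        have hset : {X | (N ↾ R).Hyperplane' X ∧ Z ⊆ X} = {Z} := by
          ext X
          simp only [mem_setOf_eq, mem_singleton_iff]
          constructor
          · rintro ⟨hX, hZX⟩
            refine (hZ.eq_of_subset_of_eRk'_le hX.1 hZX ?_ ((N ↾ R).eRk'_ne_top _)).symm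
            have e1 := hX.2
            have e2 := hhypZ.2
            rw [← e2] at e1
            exact (WithTop.add_le_add_iff_right ENat.one_ne_top).mp e1.le
          · rintro rfl
            exact ⟨hhypZ, subset_refl _⟩
        rw [hset, image_singleton]
      rw [himg, union_singleton, h.closure_insert_q hR hhypZ (hq Z hhypZ)]
    | (k+2), ih =>
      have hcorank : (N ↾ R).eRk' Z + 2 ≤ (N ↾ R).eRk' (N ↾ R).E := by
        rw [hgr, ← hk]
        have : ((2:ℕ):ℕ∞) ≤ ((k+2:ℕ):ℕ∞) := by exact_mod_cast (by omega : 2 ≤ k+2)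
        exact add_le_add_right (by exact_mod_cast this) _
      obtain ⟨Z₁, Z₂, hZ₁, hZ₂, hss₁, hss₂, hr₁, hr₂, hne⟩ :=
        hZ.exists_two_covers hcorank ((N ↾ R).eRk'_ne_top _)
      -- transfer of ranks
      have hkk : ∀ {W : Set α}, (N ↾ R).IsFlat W → (N ↾ R).eRk' W = (N ↾ R).eRk' Z + 1 →
          (N ↾ R).eRk' W + (k+1:ℕ) = (N ↾ R).eRk' R := by
        intro W hW hrW
        rw [hrW, ← hk]
        push_cast
        ring
      have hIH₁ := ih (k+1) (by omega) Z₁ hZ₁ (hkk hZ₁ hr₁)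
      have hIH₂ := ih (k+1) (by omega) Z₂ hZ₂ (hkk hZ₂ hr₂)
      set SZ := φ (N.closure R) ∪ q '' {X | (N ↾ R).Hyperplane' X ∧ Z ⊆ X} with hSZdef
      have hZflatN : N.IsFlat (N.closure Z) := N.closure_flat' Z
      have hsubphi : SZ ⊆ φ (N.closure Z) := by
        rintro z (hz | ⟨X, ⟨hX, hZX⟩, rfl⟩)
        · exact h.rev hZflatN (N.closure_flat' R) (N.closure_subset_closure hZR) hz
        · exact h.rev hZflatN (N.closure_flat' X)
            (N.closure_subset_closure hZX) (hq X hX).1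
      have hGsub : M'.closure SZ ⊆ φ (N.closure Z) :=
        (M'.closure_subset_closure hsubphi).trans (h.flat _ hZflatN).closure.subset
      by_contra hGne
      have hGss : M'.closure SZ ⊂ φ (N.closure Z) := hGsub.ssubset_of_ne hGne
      have hmono : ∀ {W : Set α}, (N ↾ R).IsFlat W → Z ⊆ W →
          M'.closure (φ (N.closure R) ∪ q '' {X | (N ↾ R).Hyperplane' X ∧ W ⊆ X})
            ⊆ M'.closure SZ := by
        intro W hW hZW
        refine M'.closure_subset_closure (union_subset_union (subset_refl _) (image_mono ?_))
        exact fun X hX => ⟨hX.1, hZW.trans hX.2⟩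
      -- rank computations in M'
      have hrphi : ∀ {W : Set α}, (N ↾ R).IsFlat W →
          M'.eRk' (φ (N.closure W)) + N.eRk' W = N.eRk' N.E := by
        intro W hW
        have := h.eRk'_phi_add (N.closure_flat' W)
        rwa [eRk'_closure_eq] at this
      have hZirank : ∀ {W : Set α}, (N ↾ R).IsFlat W → (N ↾ R).eRk' W = (N ↾ R).eRk' Z + 1 →
          M'.eRk' (φ (N.closure W)) + 1 = M'.eRk' (φ (N.closure Z)) := by
        intro W hW hrW
        have hWR : W ⊆ R := hW.subset_ground.trans_eq hgr
        have e1 := hrphi hW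
        have e2 := hrphi hZ
        rw [restrict_eRk'_eq _ hWR] at hrW
        rw [restrict_eRk'_eq _ hZR] at hrW
        rw [hrW] at e1
        have e3 : (M'.eRk' (φ (N.closure W)) + 1) + N.eRk' Z
            = M'.eRk' (φ (N.closure Z)) + N.eRk' Z := by
          rw [e2, ← e1]; ring
        exact WithTop.add_right_cancel (N.eRk'_ne_top Z) e3
      have hstep := IsFlat.eRk'_add_one_le (M'.closure_flat' SZ) (h.flat _ hZflatN) hGss
      have hle₁ : M'.eRk' (φ (N.closure Z₁)) ≤ M'.eRk' (M'.closure SZ) := by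
        rw [← hIH₁]
        exact M'.eRk'_mono (hmono hZ₁ hss₁.subset) |>.trans_eq (by rw [eRk'_closure_eq]) |>.trans
          (by rw [eRk'_closure_eq])
      have heq₁ : φ (N.closure Z₁) = M'.closure SZ := by
        refine IsFlat.eq_of_subset_of_eRk'_le (h.flat _ (N.closure_flat' Z₁)) (M'.closure_flat' SZ)
          ?_ ?_ (h.eRk'_flat_ne_top ((M'.closure_flat' SZ).subset_ground))
        · rw [← hIH₁]; exact hmono hZ₁ hss₁.subset
        · -- eRk' (closure SZ) ≤ eRk' (φ (closure Z₁))
          have e4 := hZirank hZ₁ hr₁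
          have e5 : M'.eRk' (M'.closure SZ) + 1 ≤ M'.eRk' (φ (N.closure Z₁)) + 1 := by
            rw [e4]
            calc M'.eRk' (M'.closure SZ) + 1 = M'.eRk' SZ + 1 := by rw [eRk'_closure_eq]
              _ ≤ M'.eRk' (φ (N.closure Z)) := by
                  have := hstep; rwa [eRk'_closure_eq] at this
          exact (WithTop.add_le_add_iff_right ENat.one_ne_top).mp e5
      have heq₂ : φ (N.closure Z₂) = M'.closure SZ := by
        refine IsFlat.eq_of_subset_of_eRk'_le (h.flat _ (N.closure_flat' Z₂)) (M'.closure_flat' SZ)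
          ?_ ?_ (h.eRk'_flat_ne_top ((M'.closure_flat' SZ).subset_ground))
        · rw [← hIH₂]; exact hmono hZ₂ hss₂.subset
        · have e4 := hZirank hZ₂ hr₂
          have e5 : M'.eRk' (M'.closure SZ) + 1 ≤ M'.eRk' (φ (N.closure Z₂)) + 1 := by
            rw [e4]
            calc M'.eRk' (M'.closure SZ) + 1 = M'.eRk' SZ + 1 := by rw [eRk'_closure_eq]
              _ ≤ M'.eRk' (φ (N.closure Z)) := by
                  have := hstep; rwa [eRk'_closure_eq] at this
          exact (WithTop.add_le_add_iff_right ENat.one_ne_top).mp e5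
      have : N.closure Z₁ = N.closure Z₂ :=
        h.inj (N.closure_flat' Z₁) (N.closure_flat' Z₂) (heq₁.trans heq₂.symm)
      apply hne
      rw [hZ₁.restrict_eq hR, hZ₂.restrict_eq hR, this]
  -- apply the claim
  have hle := (N ↾ R).eRk'_mono (show Z ⊆ R from hZ.subset_ground.trans_eq (restrict_ground_eq ..))
  obtain ⟨c, hc⟩ := exists_add_of_le hle
  have hcfin : c ≠ ⊤ := fun hct => ((N ↾ R).eRk'_ne_top R) (by rw [hc, hct, add_top])
  have hm : ((c.toNat : ℕ):ℕ∞) = c := ENat.coe_toNat hcfin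
  exact claim c.toNat Z hZ (by rw [hm, ← hc])

end AdjointSec2

/-- `IsMinor N M` means `N` is obtained from `M` by a sequence of deletions and
contractions. -/
inductive IsMinor' : Matroid α → Matroid α → Prop
  | refl (M : Matroid α) : IsMinor' M M
  | delete {M N : Matroid α} (h : IsMinor' N M) (D : Set α) : IsMinor' (N.delete' D) M
  | contract {M N : Matroid α} (h : IsMinor' N M) (C : Set α) : IsMinor' (N.contract' C) M

/-- `M` has an adjoint. -/
def HasAdjoint (M : Matroid α) : Prop :=
  ∃ (M' : Matroid (Set α)) (φ : Set α → Set (Set α)), IsAdjointMap M M' φ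

section Steps

variable {N : Matroid α} {F G H X Z R : Set α}

private lemma enat_cancel {a b c : ℕ∞} (hc : c ≠ ⊤) (h : a + c = b + c) : a = b :=
  WithTop.add_right_cancel hc h

lemma HasAdjoint.contract' (hN : HasAdjoint N) [N.Finite] (C : Set α) :
    (N.contract' C).HasAdjoint := by
  classical
  obtain ⟨M', φ, h⟩ := hN
  set C' := C ∩ N.E with hC'def
  set F0 := N.closure C' with hF0def
  have hF0flat : N.IsFlat F0 := N.closure_flat' C'
  have hNE : N ↾ N.E = N := N.restrict_ground_eq_self
  have hclE : N.closure N.E = N.E := N.closure_ground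
  set q : Set α → Set α :=
    fun X => if hx : (φ (N.closure X) \ φ (N.closure N.E)).Nonempty then hx.some else ∅ with hqdef
  have hq : ∀ X, (N ↾ N.E).Hyperplane' X → q X ∈ φ (N.closure X) \ φ (N.closure N.E) := by
    intro X hX
    rw [hNE] at hX
    have hXflat : N.IsFlat X := hX.1
    have hne : (φ (N.closure X) \ φ (N.closure N.E)).Nonempty := by
      rw [hclE, h.phi_ground_eq, diff_empty, hXflat.closure]
      obtain ⟨p, -, hp⟩ := h.exists_phi_singleton hX
      exact ⟨p, by rw [hp]; exact rfl⟩
    rw [hqdef]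
    simp only [hne, dif_pos]
    exact hne.some_mem
  have hq' : ∀ X, N.Hyperplane' X → φ X = {q X} := by
    intro X hX
    have hqX := hq X (by rwa [hNE])
    rw [hclE, h.phi_ground_eq, diff_empty, hX.1.closure] at hqX
    obtain ⟨p, -, hp⟩ := h.exists_phi_singleton hX
    rw [hp] at hqX ⊢
    rw [hqX]
  have hkey : ∀ Z, N.IsFlat Z → M'.closure (q '' {X | N.Hyperplane' X ∧ Z ⊆ X}) = φ Z := by
    intro Z hZ
    have h0 := h.key (subset_refl N.E) q hq (Z := Z) (by rwa [hNE])
    simp only [hNE] at h0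
    rwa [hclE, h.phi_ground_eq, empty_union, hZ.closure] at h0
  set S : Set (Set α) := q '' {X | N.Hyperplane' X ∧ F0 ⊆ X} with hSdef
  have hS : S ⊆ M'.E := by
    rintro x ⟨X, ⟨hX, -⟩, rfl⟩
    have hqX := hq X (by rwa [hNE])
    exact (h.flat _ (N.closure_flat' X)).subset_ground hqX.1
  have hqS : ∀ X, N.Hyperplane' X → F0 ⊆ X → q X ∈ S := by
    intro X hX hFX
    exact ⟨X, ⟨hX, hFX⟩, rfl⟩
  have hclS : M'.closure S = φ F0 := hkey F0 hF0flat
  -- the closure trick for flats above F0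
  have htrick : ∀ F, N.IsFlat F → F0 ⊆ F → M'.closure (φ F ∩ S) = φ F := by
    intro F hF hF0F
    refine subset_antisymm ((M'.closure_subset_closure inter_subset_left).trans
      (h.flat _ hF).closure.subset) ?_
    have himg : q '' {X | N.Hyperplane' X ∧ F ⊆ X} ⊆ φ F ∩ S := by
      rintro x ⟨X, ⟨hX, hFX⟩, rfl⟩
      refine ⟨?_, hqS X hX (hF0F.trans hFX)⟩
      have : φ X ⊆ φ F := h.rev hF hX.1 hFX
      rw [hq' X hX] at this
      exact this rfl
    calc φ F = M'.closure (q '' {X | N.Hyperplane' X ∧ F ⊆ X}) := (hkey F hF).symm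
      _ ⊆ M'.closure (φ F ∩ S) := M'.closure_subset_closure himg
  set N₂ := N.contract' C with hN₂def
  set M₂ := M' ↾ S with hM₂def
  set φ₂ : Set α → Set (Set α) := fun X => φ (N.closure (X ∪ C')) ∩ S with hφ₂def
  have hM₂ground : M₂.E = S := rfl
  have hN₂ground : N₂.E = N.E \ C := rfl
  have hrC'fin : N.eRk' C' ≠ ⊤ := N.eRk'_ne_top C'
  have hr₂ : N₂.eRk' N₂.E + N.eRk' C' = N.eRk' N.E := by
    have := contract'_eRk'_add (M := N) (C := C) (X := N.E \ C) (subset_refl _)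
    rwa [show (N.E \ C) ∪ C' = N.E by
      rw [hC'def, inter_comm, diff_union_inter]] at this
  have hrF0 : N.eRk' F0 = N.eRk' C' := eRk'_closure_eq N C'
  -- flats of N₂ correspond to flats of N above F0
  have hflatcor : ∀ X, N₂.IsFlat X →
      N.IsFlat (N.closure (X ∪ C')) ∧ F0 ⊆ N.closure (X ∪ C') ∧ X = N.closure (X ∪ C') \ C := by
    intro X hX
    exact flat_of_contract'_flat hX
  refine ⟨M₂, φ₂, h.simple.restrict hS, ?_, ?_, ?_, ?_, ?_, ?_⟩
  · -- rank equality
    have e1 : M₂.eRk' M₂.E = M'.eRk' (φ F0) := by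
      rw [hM₂ground, hM₂def, restrict_eRk'_eq _ (subset_refl S), ← eRk'_closure_eq, hclS,
        ← eRk'_closure_eq M' (φ F0), (h.flat _ hF0flat).closure]
    have e2 : M'.eRk' (φ F0) + N.eRk' F0 = N.eRk' N.E := h.eRk'_phi_add hF0flat
    rw [hrF0] at e2
    rw [e1]
    exact enat_cancel hrC'fin (e2.trans hr₂.symm)
  · -- flats map to flats
    intro X hX
    obtain ⟨hF, hF0F, hXeq⟩ := hflatcor X hX
    exact (h.flat _ hF).inter_restrict hS
  · -- injectivity
    intro X₁ X₂ hX₁ hX₂ heq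
    obtain ⟨hF₁, hF0F₁, hXeq₁⟩ := hflatcor X₁ hX₁
    obtain ⟨hF₂, hF0F₂, hXeq₂⟩ := hflatcor X₂ hX₂
    have : φ (N.closure (X₁ ∪ C')) = φ (N.closure (X₂ ∪ C')) := by
      rw [← htrick _ hF₁ hF0F₁, ← htrick _ hF₂ hF0F₂]
      rw [hφ₂def] at heq
      simp only at heq
      rw [heq]
    have := h.inj hF₁ hF₂ this
    rw [hXeq₁, hXeq₂, this]
  · -- inclusion reversing
    intro X₁ X₂ hX₁ hX₂ hsub
    obtain ⟨hF₁, -, -⟩ := hflatcor X₁ hX₁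
    obtain ⟨hF₂, -, -⟩ := hflatcor X₂ hX₂
    exact inter_subset_inter_left S
      (h.rev hF₁ hF₂ (N.closure_subset_closure (union_subset_union_left C' hsub)))
  · -- hyperplanes to points
    intro X hX
    obtain ⟨hF, hF0F, hXeq⟩ := hflatcor X hX.1
    have hXE : X ⊆ N.E \ C := hX.1.subset_ground.trans_eq hN₂ground
    have hrk : N₂.eRk' X + N.eRk' C' = N.eRk' (N.closure (X ∪ C')) := by
      rw [eRk'_closure_eq]
      exact contract'_eRk'_add hXE
    have hhypF : N.Hyperplane' (N.closure (X ∪ C')) := by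
      refine ⟨hF, ?_⟩
      calc N.eRk' (N.closure (X ∪ C')) + 1 = (N₂.eRk' X + 1) + N.eRk' C' := by rw [← hrk]; ring
        _ = N₂.eRk' N₂.E + N.eRk' C' := by rw [hX.2]
        _ = N.eRk' N.E := hr₂
    have hqmem : q (N.closure (X ∪ C')) ∈ S := hqS _ hhypF hF0F
    have hsing : φ₂ X = {q (N.closure (X ∪ C'))} := by
      show φ (N.closure (X ∪ C')) ∩ S = _
      rw [hq' _ hhypF]
      exact inter_eq_self_of_subset_left (singleton_subset_iff.mpr hqmem)
    constructor
    · -- flat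
      have : M₂.IsFlat (φ (N.closure (X ∪ C')) ∩ S) := (h.flat _ hF).inter_restrict hS
      exact this
    · -- rank one
      rw [hsing, hM₂def, restrict_eRk'_eq _ (singleton_subset_iff.mpr hqmem),
        (h.simple.indep_singleton (hS hqmem)).eRk'_eq, encard_singleton]
  · -- surjectivity
    intro P hP
    obtain ⟨x, hxS, rfl⟩ := (h.simple.restrict hS).point_iff.mp hP
    rw [hM₂ground] at hxS
    obtain ⟨X, ⟨hX, hF0X⟩, rfl⟩ := hxS
    have hflats := contract'_flat_of_flat (C := C) hX.1 hF0X
    have hXC : X \ C ⊆ N.E \ C := diff_subset_diff_left hX.1.subset_ground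
    have hrk : N₂.eRk' (X \ C) + N.eRk' C' = N.eRk' X := by
      have h5 := contract'_eRk'_add (M := N) hXC
      rw [← eRk'_closure_eq N ((X \ C) ∪ C'), hflats.2] at h5
      exact h5
    refine ⟨X \ C, ⟨hflats.1, ?_⟩, ?_⟩
    · -- hyperplane of N₂
      refine enat_cancel hrC'fin ?_
      calc (N₂.eRk' (X \ C) + 1) + N.eRk' C' = (N₂.eRk' (X \ C) + N.eRk' C') + 1 := by ring
        _ = N.eRk' X + 1 := by rw [hrk]
        _ = N.eRk' N.E := hX.2
        _ = N₂.eRk' N₂.E + N.eRk' C' := hr₂.symm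
    · show φ (N.closure ((X \ C) ∪ C')) ∩ S = {q X}
      rw [hflats.2, hq' X hX]
      exact inter_eq_self_of_subset_left (singleton_subset_iff.mpr ⟨X, ⟨hX, hF0X⟩, rfl⟩)

end Steps

section DeleteStep

variable {N : Matroid α} {F G H X Z : Set α}

private lemma subset_pair_of_encard_le_two {γ : Type*} {s : Set γ} (hs : s.encard ≤ 2)
    (hne : s.Nonempty) : ∃ a b, a ∈ s ∧ b ∈ s ∧ s ⊆ {a, b} := by
  obtain ⟨a, ha⟩ := hne
  rcases (s \ {a}).eq_empty_or_nonempty with hdiff | ⟨b, hb⟩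
  · refine ⟨a, a, ha, ha, ?_⟩
    rw [pair_eq_singleton]
    exact (diff_eq_empty.mp hdiff).trans (by simp)
  · refine ⟨a, b, ha, hb.1, fun c hc => ?_⟩
    by_contra hc'
    simp only [mem_insert_iff, mem_singleton_iff, not_or] at hc'
    have hba : b ≠ a := by simpa using hb.2
    have h3 : ({c, a, b} : Set γ) ⊆ s := insert_subset hc (insert_subset ha
      (singleton_subset_iff.mpr hb.1))
    have hcard : ({c, a, b} : Set γ).encard = 3 := by
      rw [encard_insert_of_notMem (by simp [hc'.1, hc'.2]),
        encard_insert_of_notMem (by simpa using hba.symm), encard_singleton]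
      rfl
    have := (encard_mono h3).trans hs
    rw [hcard] at this
    norm_num at this

lemma HasAdjoint.delete' (hN : HasAdjoint N) [N.Finite] (D : Set α) :
    (N.delete' D).HasAdjoint := by
  classical
  obtain ⟨M', φ, h⟩ := hN
  haveI hM'fin : M'.Finite := h.finite
  set R := N.E \ D with hRdef
  have hR : R ⊆ N.E := diff_subset
  haveI hNRfin : (N ↾ R).Finite := ⟨N.ground_finite.subset hR⟩
  set T := φ (N.closure R) with hTdef
  have hTflat : M'.IsFlat T := h.flat _ (N.closure_flat' R)
  have hTE : T ⊆ M'.E := hTflat.subset_ground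
  have hTfin : M'.eRk' T ≠ ⊤ := h.eRk'_flat_ne_top hTE
  set q : Set α → Set α :=
    fun X => if hx : (φ (N.closure X) \ T).Nonempty then hx.some else ∅ with hqdef
  have hq : ∀ X, (N ↾ R).Hyperplane' X → q X ∈ φ (N.closure X) \ T := by
    intro X hX
    have hrk := h.eRk'_phi_hyp hR hX
    have hTsub : T ⊆ φ (N.closure X) := h.rev (N.closure_flat' X) (N.closure_flat' R)
      (N.closure_subset_closure (hX.1.subset_ground.trans_eq (restrict_ground_eq ..)))
    have hne : (φ (N.closure X) \ T).Nonempty := by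
      rcases (φ (N.closure X) \ T).eq_empty_or_nonempty with hemp | hne
      · exfalso
        have : φ (N.closure X) = T := (diff_eq_empty.mp hemp).antisymm hTsub
        rw [this] at hrk
        nth_rewrite 1 [← add_zero (M'.eRk' T)] at hrk
        have := WithTop.add_left_cancel hTfin hrk
        exact (by norm_num : (0:ℕ∞) ≠ 1) this
      · exact hne
    rw [hqdef]
    simp only [hne, dif_pos]
    exact hne.some_mem
  have hqcl : ∀ X, (N ↾ R).Hyperplane' X →
      M'.closure (insert (q X) T) = φ (N.closure X) := fun X hX =>
    h.closure_insert_q hR hX (hq X hX)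
  have hd2 : ∀ X, (N ↾ R).Hyperplane' X → ∀ Y, (N ↾ R).Hyperplane' Y →
      q Y ∈ φ (N.closure X) → X = Y := by
    intro X hX Y hY hmem
    have hTsubX : T ⊆ φ (N.closure X) := h.rev (N.closure_flat' X) (N.closure_flat' R)
      (N.closure_subset_closure (hX.1.subset_ground.trans_eq (restrict_ground_eq ..)))
    have hsub : φ (N.closure Y) ⊆ φ (N.closure X) := by
      rw [← hqcl Y hY]
      exact (M'.closure_subset_closure (insert_subset hmem hTsubX)).trans
        (h.flat _ (N.closure_flat' X)).closure.subset
    have heq : φ (N.closure Y) = φ (N.closure X) := by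
      refine IsFlat.eq_of_subset_of_eRk'_le (h.flat _ (N.closure_flat' Y))
        (h.flat _ (N.closure_flat' X)) hsub ?_
        (h.eRk'_flat_ne_top (h.flat _ (N.closure_flat' X)).subset_ground)
      rw [h.eRk'_phi_hyp hR hX, h.eRk'_phi_hyp hR hY]
    have := h.inj (N.closure_flat' Y) (N.closure_flat' X) heq
    rw [hX.1.restrict_eq hR, hY.1.restrict_eq hR, this]
  set S₃ : Set (Set α) := q '' {X | (N ↾ R).Hyperplane' X} with hS₃def
  have hS₃sub : S₃ ⊆ M'.E \ T := by
    rintro x ⟨X, hX, rfl⟩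
    exact ⟨(h.flat _ (N.closure_flat' X)).subset_ground (hq X hX).1, (hq X hX).2⟩
  have hS₃T : S₃ ∩ T = ∅ := by
    rw [eq_empty_iff_forall_notMem]
    rintro x ⟨hx, hxT⟩
    exact (hS₃sub hx).2 hxT
  obtain ⟨J₀, hJ₀⟩ := M'.exists_isBasis' (T ∩ M'.E)
  have hTint : T ∩ M'.E = T := inter_eq_self_of_subset_left hTE
  have hJ₀T : J₀ ⊆ T := hJ₀.subset.trans inter_subset_left
  have hJ₀cl : M'.closure J₀ = M'.closure T := by
    have := hJ₀.closure_eq_closure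
    rwa [hTint] at this
  have hJ₀card : M'.eRk' T = J₀.encard := by
    have := hJ₀.eRk'_eq
    rwa [hTint] at this
  have hrkins : ∀ X, (N ↾ R).Hyperplane' X →
      M'.eRk' (insert (q X) T) = M'.eRk' T + 1 := by
    intro X hX
    exact eRk'_insert_eq ((hS₃sub ⟨X, hX, rfl⟩).1) (by rw [hTflat.closure]; exact (hq X hX).2)
  -- rank of (A ∪ J₀) equals rank of (A ∪ T)
  have hswap : ∀ A : Set (Set α), M'.eRk' (A ∪ J₀) = M'.eRk' (A ∪ T) := by
    intro A
    rw [← eRk'_closure_eq, ← closure_union_closure_right_eq, hJ₀cl,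
      closure_union_closure_right_eq, eRk'_closure_eq]
  -- key pair-independence fact
  have hpair : ∀ X, (N ↾ R).Hyperplane' X → ∀ Y, (N ↾ R).Hyperplane' Y →
      M'.Indep ({q X, q Y} ∪ J₀) := by
    intro X hX Y hY
    have hqXT : q X ∉ T := (hq X hX).2
    have hqYT : q Y ∉ T := (hq Y hY).2
    have hqXE : q X ∈ M'.E := (hS₃sub ⟨X, hX, rfl⟩).1
    have hqYE : q Y ∈ M'.E := (hS₃sub ⟨Y, hY, rfl⟩).1
    by_cases hXY : X = Y
    · subst hXY
      have hset : ({q X, q X} : Set (Set α)) ∪ J₀ = insert (q X) J₀ := by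
        rw [pair_eq_singleton, singleton_union]
      rw [hset]
      refine indep_of_eRk'_eq_encard ?_
        (M'.ground_finite.subset (insert_subset hqXE (hJ₀T.trans hTE)))
        (insert_subset hqXE (hJ₀T.trans hTE))
      have e1 : M'.eRk' (insert (q X) J₀) = M'.eRk' (insert (q X) T) := by
        have := hswap {q X}
        rwa [singleton_union, singleton_union] at this
      rw [e1, hrkins X hX, encard_insert_of_notMem (fun hm => hqXT (hJ₀T hm)), hJ₀card]
    · have hqne : q X ≠ q Y := fun he => hXY (hd2 X hX Y hY (he ▸ (hq X hX).1))
      have hset : ({q X, q Y} : Set (Set α)) ∪ J₀ = insert (q X) (insert (q Y) J₀) := by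
        simp [insert_union]
      rw [hset]
      refine indep_of_eRk'_eq_encard ?_
        (M'.ground_finite.subset (insert_subset hqXE (insert_subset hqYE (hJ₀T.trans hTE))))
        (insert_subset hqXE (insert_subset hqYE (hJ₀T.trans hTE)))
      have e1 : M'.eRk' (insert (q X) (insert (q Y) J₀))
          = M'.eRk' (insert (q X) (insert (q Y) T)) := by
        have h6 := hswap {q X, q Y}
        rwa [show ({q X, q Y} : Set (Set α)) ∪ J₀ = insert (q X) (insert (q Y) J₀) by
            simp [insert_union],
          show ({q X, q Y} : Set (Set α)) ∪ T = insert (q X) (insert (q Y) T) by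
            simp [insert_union]] at h6
      have hnotin : q X ∉ M'.closure (insert (q Y) T) := by
        rw [hqcl Y hY]
        exact fun hm => hXY ((hd2 Y hY X hX hm).symm)
      have e2 : M'.eRk' (insert (q X) (insert (q Y) T)) = M'.eRk' T + 1 + 1 := by
        rw [eRk'_insert_eq hqXE hnotin, hrkins Y hY]
      rw [e1, e2, encard_insert_of_notMem (by
          simp only [mem_insert_iff, not_or]
          exact ⟨hqne, fun hm => hqXT (hJ₀T hm)⟩),
        encard_insert_of_notMem (fun hm => hqYT (hJ₀T hm)), hJ₀card]
  set N₂ := N.delete' D with hN₂def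
  set M₃ := (M'.contract' T) ↾ S₃ with hM₃def
  set φ₃ : Set α → Set (Set α) := fun X => φ (N.closure X) ∩ S₃ with hφ₃def
  have hM₃E : M₃.E = S₃ := rfl
  have hS₃sub' : S₃ ⊆ (M'.contract' T).E := hS₃sub
  -- simplicity of M₃
  have hsimple₃ : M₃.Simple' := by
    intro P hP hcard
    have hPS : P ⊆ S₃ := hP
    have hPET : P ⊆ M'.E \ T := hPS.trans hS₃sub
    have hPind : M'.Indep (P ∪ J₀) := by
      rcases P.eq_empty_or_nonempty with rfl | hne
      · rw [empty_union]; exact hJ₀.indep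
      · obtain ⟨a, b, haP, hbP, hsub⟩ := subset_pair_of_encard_le_two hcard hne
        obtain ⟨X, hX, rfl⟩ := hPS haP
        obtain ⟨Y, hY, rfl⟩ := hPS hbP
        exact (hpair X hX Y hY).subset (union_subset_union_left J₀ hsub)
    refine restrict_indep_iff.mpr ⟨?_, hPS⟩
    rw [contract'_indep_iff hJ₀]
    exact ⟨hPET, hPind⟩
  -- the key lemma instances
  have hkeyZ : ∀ Z, (N ↾ R).IsFlat Z →
      M'.closure (T ∪ q '' {X | (N ↾ R).Hyperplane' X ∧ Z ⊆ X}) = φ (N.closure Z) :=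
    fun Z hZ => h.key hR q hq hZ
  -- spanning
  have hspan : M'.closure (T ∪ S₃) = M'.E := by
    have h0 := hkeyZ _ ((N ↾ R).closure_flat' ∅)
    have hsetr : {X | (N ↾ R).Hyperplane' X ∧ (N ↾ R).closure ∅ ⊆ X}
        = {X | (N ↾ R).Hyperplane' X} := by
      ext X
      simp only [mem_setOf_eq, and_iff_left_iff_imp]
      intro hX
      have h7 := (N ↾ R).closure_subset_closure (empty_subset X)
      rwa [hX.1.closure] at h7
    rw [hsetr] at h0
    have hclZ₀ : N.closure ((N ↾ R).closure ∅) = N.closure ∅ := by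
      rw [restrict_closure_eq'' N (empty_subset R) hR]
      refine subset_antisymm ?_ (N.closure_subset_closure (empty_subset _))
      have h8 := N.closure_subset_closure (inter_subset_left : N.closure ∅ ∩ R ⊆ N.closure ∅)
      rwa [closure_closure] at h8
    rw [hclZ₀] at h0
    have hr0 : N.eRk' (N.closure ∅) = 0 := by
      rw [eRk'_closure_eq]
      exact le_antisymm ((N.eRk'_le_encard ∅).trans_eq encard_empty) (by simp)
    have hfull := h.eRk'_phi_add (N.closure_flat' ∅)
    rw [hr0, add_zero] at hfull
    have h9 : φ (N.closure ∅) = M'.E := by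
      refine IsFlat.eq_ground_of_eRk'_ge (h.flat _ (N.closure_flat' ∅)) ?_
        (h.eRk'_flat_ne_top (subset_refl _))
      rw [hfull, h.rank_eq]
    rw [h9] at h0
    exact h0
  have hrT : M'.eRk' T + N.eRk' R = N.eRk' N.E := by
    have h10 := h.eRk'_phi_add (N.closure_flat' R)
    rwa [eRk'_closure_eq] at h10
  -- flats of M₃
  have hTsubG : ∀ X, (N ↾ R).IsFlat X → T ⊆ φ (N.closure X) := by
    intro X hX
    exact h.rev (N.closure_flat' X) (N.closure_flat' R)
      (N.closure_subset_closure (hX.subset_ground.trans_eq (restrict_ground_eq ..)))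
  have hflat₃ : ∀ X, (N ↾ R).IsFlat X → M₃.IsFlat (φ (N.closure X) ∩ S₃) := by
    intro X hX
    have hGflat : M'.IsFlat (φ (N.closure X)) := h.flat _ (N.closure_flat' X)
    have hcflat := (contract'_flat_of_flat (C := T) hGflat
      (by rw [hTint, hTflat.closure]; exact hTsubG X hX)).1
    have h11 := hcflat.inter_restrict (R := S₃) hS₃sub'
    have heq : (φ (N.closure X) \ T) ∩ S₃ = φ (N.closure X) ∩ S₃ := by
      ext z
      constructor
      · rintro ⟨⟨h1, -⟩, h2⟩; exact ⟨h1, h2⟩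
      · rintro ⟨h1, h2⟩; exact ⟨⟨h1, fun hzT => (hS₃sub h2).2 hzT⟩, h2⟩
    rwa [heq] at h11
  -- closure trick
  have htrick₃ : ∀ X, (N ↾ R).IsFlat X →
      M'.closure ((φ (N.closure X) ∩ S₃) ∪ T) = φ (N.closure X) := by
    intro X hX
    have hGflat := h.flat _ (N.closure_flat' X)
    refine subset_antisymm ((M'.closure_subset_closure
      (union_subset inter_subset_left (hTsubG X hX))).trans hGflat.closure.subset) ?_
    have h0 := hkeyZ X hX
    have himg : q '' {Y | (N ↾ R).Hyperplane' Y ∧ X ⊆ Y} ⊆ φ (N.closure X) ∩ S₃ := by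
      rintro z ⟨Y, ⟨hY, hXY⟩, rfl⟩
      exact ⟨h.rev (N.closure_flat' X) (N.closure_flat' Y)
        (N.closure_subset_closure hXY) (hq Y hY).1, ⟨Y, hY, rfl⟩⟩
    calc φ (N.closure X)
        = M'.closure (T ∪ q '' {Y | (N ↾ R).Hyperplane' Y ∧ X ⊆ Y}) := h0.symm
      _ ⊆ M'.closure ((φ (N.closure X) ∩ S₃) ∪ T) := M'.closure_subset_closure (by
          rintro z (hz | hz)
          · exact Or.inr hz
          · exact Or.inl (himg hz))
  -- hyperplanes give singletons
  have hpoint₃ : ∀ X, (N ↾ R).Hyperplane' X → φ (N.closure X) ∩ S₃ = {q X} := by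
    intro X hX
    refine subset_antisymm ?_ (singleton_subset_iff.mpr ⟨(hq X hX).1, ⟨X, hX, rfl⟩⟩)
    rintro z ⟨hz, ⟨Y, hY, rfl⟩⟩
    rw [mem_singleton_iff]
    exact (congrArg q (hd2 X hX Y hY hz)).symm
  have hsingind : ∀ X, (N ↾ R).Hyperplane' X → M₃.Indep {q X} := by
    intro X hX
    refine restrict_indep_iff.mpr ⟨?_, singleton_subset_iff.mpr ⟨X, hX, rfl⟩⟩
    rw [contract'_indep_iff hJ₀]
    refine ⟨singleton_subset_iff.mpr (hS₃sub ⟨X, hX, rfl⟩), ?_⟩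
    have h12 := hpair X hX X hX
    rwa [pair_eq_singleton, singleton_union] at h12
  -- assemble the adjoint
  refine ⟨M₃, φ₃, hsimple₃, ?_, ?_, ?_, ?_, ?_, ?_⟩
  · -- rank equality
    have e1 : M₃.eRk' M₃.E = (M'.contract' T).eRk' S₃ := restrict_eRk'_eq _ (subset_refl S₃)
    have e2 := contract'_eRk'_add (M := M') (C := T) (X := S₃) hS₃sub
    rw [hTint] at e2
    have e3 : M'.eRk' (S₃ ∪ T) = N.eRk' N.E := by
      rw [union_comm, ← eRk'_closure_eq, hspan, h.rank_eq]
    have e4 : N₂.eRk' N₂.E = N.eRk' R := by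
      show (N ↾ R).eRk' R = N.eRk' R
      exact restrict_eRk'_eq _ (subset_refl R)
    rw [e1, e4]
    refine enat_cancel hTfin ?_
    rw [e2, e3, ← hrT]
    ring
  · -- flats to flats
    intro X hX
    exact hflat₃ X hX
  · -- injectivity
    intro X₁ X₂ hX₁ hX₂ heq
    have e1 : φ (N.closure X₁) = φ (N.closure X₂) := by
      rw [← htrick₃ X₁ hX₁, ← htrick₃ X₂ hX₂]
      show M'.closure (φ₃ X₁ ∪ T) = M'.closure (φ₃ X₂ ∪ T)
      rw [heq]
    have e2 := h.inj (N.closure_flat' X₁) (N.closure_flat' X₂) e1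
    have hX₁' : (N ↾ R).IsFlat X₁ := hX₁
    have hX₂' : (N ↾ R).IsFlat X₂ := hX₂
    rw [hX₁'.restrict_eq hR, hX₂'.restrict_eq hR, e2]
  · -- inclusion reversing
    intro X₁ X₂ hX₁ hX₂ hsub
    exact inter_subset_inter_left S₃ (h.rev (N.closure_flat' X₁) (N.closure_flat' X₂)
      (N.closure_subset_closure hsub))
  · -- hyperplanes to points
    intro X hX
    have hXhyp : (N ↾ R).Hyperplane' X := hX
    constructor
    · exact hflat₃ X hXhyp.1
    · show M₃.eRk' (φ (N.closure X) ∩ S₃) = 1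
      rw [hpoint₃ X hXhyp, (hsingind X hXhyp).eRk'_eq, encard_singleton]
  · -- surjectivity
    intro P hP
    obtain ⟨x, hxE, rfl⟩ := hsimple₃.point_iff.mp hP
    obtain ⟨X, hX, rfl⟩ := (show x ∈ S₃ from hxE)
    exact ⟨X, hX, hpoint₃ X hX⟩

end DeleteStep

lemma IsMinor'.finite' {M N : Matroid α} (h : IsMinor' N M) : M.Finite → N.Finite := by
  induction h with
  | refl => exact fun h => h
  | delete h D ih =>
    intro hM
    exact ⟨(@Matroid.ground_finite _ _ (ih hM)).subset diff_subset⟩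
  | contract h C ih =>
    intro hM
    exact ⟨(@Matroid.ground_finite _ _ (ih hM)).subset diff_subset⟩

/-- The class of matroids with an adjoint is minor-closed. -/
theorem stmt10 (M N : Matroid α) [M.Finite] (hM : M.HasAdjoint) (h : IsMinor' N M) :
    N.HasAdjoint := by
  have key : ∀ (M₀ N₀ : Matroid α), IsMinor' N₀ M₀ → M₀.Finite → M₀.HasAdjoint → N₀.HasAdjoint := by
    intro M₀ N₀ h₀
    induction h₀ with
    | refl => exact fun _ hM₀ => hM₀
    | delete h₁ D ih =>
      intro hfin hM₀
      haveI := h₁.finite' hfin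
      exact HasAdjoint.delete' (ih hfin hM₀) D
    | contract h₁ C ih =>
      intro hfin hM₀
      haveI := h₁.finite' hfin
      exact HasAdjoint.contract' (ih hfin hM₀) C
  exact key M N h ‹M.Finite› hM
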